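/- For n≥3, let M_n be the n×n symmetric matrix with diagonal entries all equal to 2, superdiagonal and subdiagonal entries equal to 1 except M_n(n−1,n)=M_n(n,n−1)=b, corner entries M_n(1,n)=M_n(n,1)=a, and zeros elsewhere. Then for every k with 1≤k≤n−1, the determinant of the leading principal k×k submatrix of M_n equals k+1, and det M_n = 2n − (n−1)a² − (n−1)b² + (−1)^{n+1}·2ab. -/
import Mathlib


/-- The symmetric matrix supported on the cycle `C_n` with diagonal `2`, off-diagonal
entries `1` except the `(n-1,n)` entry which is `b`, and corner entries `a`. -/
def cycleMatrix (n : ℕ) (a b : ℝ) : Matrix (Fin n) (Fin n) ℝ :=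
  Matrix.of fun i j =>
    if i = j then 2
    else if (i : ℕ) + 1 = (j : ℕ) ∨ (j : ℕ) + 1 = (i : ℕ) then
      (if (i : ℕ) = n - 1 ∨ (j : ℕ) = n - 1 then b else 1)
    else if ((i : ℕ) = 0 ∧ (j : ℕ) = n - 1) ∨ ((j : ℕ) = 0 ∧ (i : ℕ) = n - 1) then a
    else 0

lemma coe_succAbove {n : ℕ} (p : Fin (n+1)) (j : Fin n) :
    ((p.succAbove j : Fin (n+1)) : ℕ) = if (j:ℕ) < p then (j:ℕ) else (j:ℕ)+1 := by
  have hlt : (j.castSucc < p) ↔ ((j:ℕ) < p) := by rw [Fin.lt_def, Fin.coe_castSucc]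
  rw [Fin.succAbove]
  split_ifs with h1 h2 h3 <;> simp_all [Fin.val_succ]

lemma sum_two {M : Type*} [AddCommMonoid M] {n : ℕ} (f : Fin n → M) (i j : Fin n)
    (hij : i ≠ j) (h : ∀ l, l ≠ i → l ≠ j → f l = 0) :
    ∑ l, f l = f i + f j := by
  rw [← Finset.sum_subset (Finset.subset_univ {i, j})
    (fun x _ hx => h x (fun h => hx (by simp [h])) (fun h => hx (by simp [h])))]
  rw [Finset.sum_insert (by simp [hij]), Finset.sum_singleton]

def tri (k : ℕ) : Matrix (Fin k) (Fin k) ℝ :=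
  Matrix.of fun i j =>
    if (i : ℕ) = (j : ℕ) then 2
    else if (i : ℕ) + 1 = (j : ℕ) ∨ (j : ℕ) + 1 = (i : ℕ) then 1 else 0

theorem tri_det : ∀ k : ℕ, (tri k).det = (k : ℝ) + 1
  | 0 => by simp [tri]
  | 1 => by simp [tri, Matrix.det_fin_one, Matrix.of_apply]; norm_num
  | (m+2) => by
    have ih1 := tri_det (m+1)
    have ih0 := tri_det m
    rw [Matrix.det_succ_row (tri (m+1+1)) (Fin.last (m+1))]
    rw [sum_two _ (⟨m, by omega⟩ : Fin (m+2)) (Fin.last (m+1))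
      (by simp [Fin.ext_iff, Fin.last])
      (by
        intro l h1 h2
        have hl1 : (l : ℕ) ≠ m := fun h => h1 (Fin.ext h)
        have hl2 : (l : ℕ) ≠ m + 1 := fun h => h2 (Fin.ext h)
        have hz : tri (m+1+1) (Fin.last (m+1)) l = 0 := by
          simp only [tri, Matrix.of_apply, Fin.val_last]
          split_ifs <;> first | rfl | omega | simp_all
        rw [hz, mul_zero, zero_mul])]
    have hminor1 : (tri (m+1+1)).submatrix (Fin.last (m+1)).succAbove
        ((Fin.last (m+1)).succAbove) = tri (m+1) := by
      ext i j
      simp only [Matrix.submatrix_apply, tri, Matrix.of_apply, coe_succAbove, Fin.val_last]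
      have := i.isLt; have := j.isLt
      split_ifs <;> first | rfl | omega | simp_all
    -- the (m) column minor
    have hS : ((tri (m+1+1)).submatrix (Fin.last (m+1)).succAbove
        ((⟨m, by omega⟩ : Fin (m+2)).succAbove)).det = (m : ℝ) + 1 := by
      rw [Matrix.det_succ_column _ (Fin.last m)]
      rw [Finset.sum_eq_single (Fin.last m)]
      · have hcol : (tri (m+1+1)).submatrix (Fin.last (m+1)).succAbove
            ((⟨m, by omega⟩ : Fin (m+2)).succAbove) (Fin.last m) (Fin.last m) = 1 := by
          simp only [Matrix.submatrix_apply, tri, Matrix.of_apply, coe_succAbove, Fin.val_last]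
          split_ifs <;> first | rfl | omega | simp_all
        have hminor2 : ((tri (m+1+1)).submatrix (Fin.last (m+1)).succAbove
            ((⟨m, by omega⟩ : Fin (m+2)).succAbove)).submatrix
            (Fin.last m).succAbove (Fin.last m).succAbove = tri m := by
          ext i j
          simp only [Matrix.submatrix_apply, tri, Matrix.of_apply, coe_succAbove, Fin.val_last]
          have := i.isLt; have := j.isLt
          split_ifs <;> first | rfl | omega | simp_all
        rw [hcol, Matrix.submatrix_submatrix, Function.comp_def, Function.comp_def]
        rw [show ((tri (m+1+1)).submatrix
            (fun i => (Fin.last (m+1)).succAbove ((Fin.last m).succAbove i))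
            (fun j => (⟨m, by omega⟩ : Fin (m+2)).succAbove ((Fin.last m).succAbove j))) = tri m from by
          ext i j
          simp only [Matrix.submatrix_apply, tri, Matrix.of_apply, coe_succAbove, Fin.val_last]
          have := i.isLt; have := j.isLt
          split_ifs <;> first | rfl | omega | simp_all]
        rw [ih0]
        simp [Fin.val_last]
      · intro l _ hl
        have hl' : (l : ℕ) ≠ m := fun h => hl (Fin.ext (by simp [Fin.val_last, h]))
        have hz : (tri (m+1+1)).submatrix (Fin.last (m+1)).succAbove
            ((⟨m, by omega⟩ : Fin (m+2)).succAbove) l (Fin.last m) = 0 := by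
          simp only [Matrix.submatrix_apply, tri, Matrix.of_apply, coe_succAbove, Fin.val_last]
          have := l.isLt
          split_ifs <;> first | rfl | omega | simp_all
        rw [hz, mul_zero, zero_mul]
      · intro h; exact absurd (Finset.mem_univ _) h
    rw [hminor1, ih1, hS]
    have hval1 : tri (m+1+1) (Fin.last (m+1)) ⟨m, by omega⟩ = 1 := by
      simp only [tri, Matrix.of_apply, Fin.val_last]
      split_ifs <;> first | rfl | omega | simp_all
    have hval2 : tri (m+1+1) (Fin.last (m+1)) (Fin.last (m+1)) = 2 := by
      simp only [tri, Matrix.of_apply, Fin.val_last]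
      split_ifs <;> first | rfl | omega | simp_all
    rw [hval1, hval2]
    simp only [Fin.val_last]
    have e1 : ((-1 : ℝ)) ^ (m + 1 + m) = -1 := by
      rw [show m+1+m = 2*m+1 from by ring, pow_succ, pow_mul]; norm_num
    have e2 : ((-1 : ℝ)) ^ (m + 1 + (m+1)) = 1 := by
      rw [show m+1+(m+1) = 2*(m+1) from by ring, pow_mul]; norm_num
    rw [e1, e2]
    push_cast
    ring


lemma sum_three {M : Type*} [AddCommMonoid M] {n : ℕ} (f : Fin n → M) (i j k : Fin n)
    (hij : i ≠ j) (hik : i ≠ k) (hjk : j ≠ k)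
    (h : ∀ l, l ≠ i → l ≠ j → l ≠ k → f l = 0) :
    ∑ l, f l = f i + f j + f k := by
  rw [← Finset.sum_subset (Finset.subset_univ {i, j, k})
    (fun x _ hx => h x (fun h => hx (by simp [h])) (fun h => hx (by simp [h]))
      (fun h => hx (by simp [h])))]
  rw [Finset.sum_insert (by simp [hij, hik]), Finset.sum_insert (by simp [hjk]),
    Finset.sum_singleton, add_assoc]

lemma cyc_tri (n : ℕ) (a b : ℝ) (k c : ℕ) (hk : k + c + 1 ≤ n)
    (f g : Fin k → Fin n) (hf : ∀ i, (f i : ℕ) = i + c) (hg : ∀ j, (g j : ℕ) = j + c) :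
    (cycleMatrix n a b).submatrix f g = tri k := by
  ext i j
  have hik := i.isLt
  have hjk := j.isLt
  simp only [Matrix.submatrix_apply, cycleMatrix, tri, Matrix.of_apply, Fin.ext_iff, hf, hg]
  split_ifs <;> first | rfl | omega | simp_all

lemma fin_ne {n : ℕ} (i j : Fin n) (h : (i : ℕ) ≠ (j : ℕ)) : i ≠ j :=
  fun he => h (congrArg Fin.val he)

set_option maxHeartbeats 1600000 in
/-- Leading principal minors and determinant of the cycle matrix `M_n`. -/
theorem stmt_10 (n : ℕ) (hn : 3 ≤ n) (a b : ℝ) :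
    (∀ k : ℕ, 1 ≤ k → ∀ hk : k ≤ n - 1,
        (Matrix.of fun i j : Fin k =>
          cycleMatrix n a b ⟨i, by omega⟩ ⟨j, by omega⟩).det = (k : ℝ) + 1) ∧
    (cycleMatrix n a b).det =
      2 * (n : ℝ) - ((n : ℝ) - 1) * a ^ 2 - ((n : ℝ) - 1) * b ^ 2
        + (-1 : ℝ) ^ (n + 1) * 2 * a * b := by
  obtain ⟨P, rfl⟩ : ∃ P, n = P + 3 := ⟨n - 3, by omega⟩
  constructor
  · intro k hk1 hk
    have he : (Matrix.of fun i j : Fin k =>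
        cycleMatrix (P+3) a b ⟨i, by omega⟩ ⟨j, by omega⟩) = tri k := by
      ext i j
      have hik := i.isLt
      have hjk := j.isLt
      simp only [cycleMatrix, tri, Matrix.of_apply, Fin.ext_iff]
      split_ifs <;> first | rfl | omega | simp_all
    rw [he, tri_det]
  · -- determinant expansion along the last row
    rw [Matrix.det_succ_row (cycleMatrix (P+3) a b) (Fin.last (P+2))]
    rw [sum_three _ (⟨0, by omega⟩ : Fin (P+3)) (⟨P+1, by omega⟩ : Fin (P+3)) (Fin.last (P+2))
      (fin_ne _ _ (by simp))
      (fin_ne _ _ (by simp [Fin.val_last]))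
      (fin_ne _ _ (by simp [Fin.val_last]))
      (by
        intro l h1 h2 h3
        have hl1 : (l : ℕ) ≠ 0 := fun h => h1 (Fin.ext h)
        have hl2 : (l : ℕ) ≠ P+1 := fun h => h2 (Fin.ext h)
        have hl3 : (l : ℕ) ≠ P+2 := fun h => h3 (Fin.ext (by simp [Fin.val_last, h]))
        have hz : cycleMatrix (P+3) a b (Fin.last (P+2)) l = 0 := by
          have := l.isLt
          simp only [cycleMatrix, Matrix.of_apply, Fin.ext_iff, Fin.val_last]
          split_ifs <;> first | rfl | omega | simp_all
        rw [hz, mul_zero, zero_mul])]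
    -- entry values on the last row
    have hv0 : cycleMatrix (P+3) a b (Fin.last (P+2)) ⟨0, by omega⟩ = a := by
      simp only [cycleMatrix, Matrix.of_apply, Fin.ext_iff, Fin.val_last]
      split_ifs <;> first | rfl | omega | simp_all
    have hv1 : cycleMatrix (P+3) a b (Fin.last (P+2)) ⟨P+1, by omega⟩ = b := by
      simp only [cycleMatrix, Matrix.of_apply, Fin.ext_iff, Fin.val_last]
      split_ifs <;> first | rfl | omega | simp_all
    have hv2 : cycleMatrix (P+3) a b (Fin.last (P+2)) (Fin.last (P+2)) = 2 := by
      simp only [cycleMatrix, Matrix.of_apply, Fin.ext_iff, Fin.val_last]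
      split_ifs <;> first | rfl | omega | simp_all
    -- last minor is tri (P+2)
    have hC : ((cycleMatrix (P+3) a b).submatrix (Fin.last (P+2)).succAbove
        (Fin.last (P+2)).succAbove).det = (P : ℝ) + 3 := by
      rw [cyc_tri (P+3) a b (P+2) 0 (by omega) _ _
        (fun i => by simp [coe_succAbove, Fin.val_last, i.isLt])
        (fun j => by simp [coe_succAbove, Fin.val_last, j.isLt]), tri_det]
      push_cast; ring
    -- minor A (column 0 removed ... i.e. keeping columns 1..P+2)
    have hA : ((cycleMatrix (P+3) a b).submatrix (Fin.last (P+2)).succAbove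
        ((⟨0, by omega⟩ : Fin (P+3)).succAbove)).det
        = b + (-1:ℝ)^(P+1) * a * ((P:ℝ) + 2) := by
      rw [Matrix.det_succ_row_zero]
      rw [sum_two _ (⟨0, by omega⟩ : Fin (P+2)) (Fin.last (P+1))
        (fin_ne _ _ (by simp [Fin.val_last]))
        (by
          intro l h1 h2
          have hl1 : (l : ℕ) ≠ 0 := fun h => h1 (Fin.ext h)
          have hl2 : (l : ℕ) ≠ P+1 := fun h => h2 (Fin.ext (by simp [Fin.val_last, h]))
          have hz : (cycleMatrix (P+3) a b).submatrix (Fin.last (P+2)).succAbove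
              ((⟨0, by omega⟩ : Fin (P+3)).succAbove) 0 l = 0 := by
            have := l.isLt
            simp only [Matrix.submatrix_apply, cycleMatrix, Matrix.of_apply, Fin.ext_iff,
              coe_succAbove, Fin.val_last]
            split_ifs <;> first | rfl | omega | simp_all
          rw [hz, mul_zero, zero_mul])]
      have he0 : (cycleMatrix (P+3) a b).submatrix (Fin.last (P+2)).succAbove
          ((⟨0, by omega⟩ : Fin (P+3)).succAbove) 0 (⟨0, by omega⟩ : Fin (P+2)) = 1 := by
        simp only [Matrix.submatrix_apply, cycleMatrix, Matrix.of_apply, Fin.ext_iff,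
          coe_succAbove, Fin.val_last]
        split_ifs <;> first | rfl | omega | simp_all
      have he1 : (cycleMatrix (P+3) a b).submatrix (Fin.last (P+2)).succAbove
          ((⟨0, by omega⟩ : Fin (P+3)).succAbove) 0 (Fin.last (P+1)) = a := by
        simp only [Matrix.submatrix_apply, cycleMatrix, Matrix.of_apply, Fin.ext_iff,
          coe_succAbove, Fin.val_last]
        split_ifs <;> first | rfl | omega | simp_all
      -- minor at (0,0) : lower triangular with diagonal 1,...,1,b
      have hL : ((((cycleMatrix (P+3) a b).submatrix (Fin.last (P+2)).succAbove
          ((⟨0, by omega⟩ : Fin (P+3)).succAbove)).submatrix Fin.succ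
          ((⟨0, by omega⟩ : Fin (P+2)).succAbove))).det = b := by
        rw [Matrix.submatrix_submatrix]
        have hcoe_r : ∀ i : Fin (P+1),
            (((Fin.last (P+2)).succAbove ∘ Fin.succ) i : ℕ) = (i : ℕ) + 1 := by
          intro i
          simp [coe_succAbove, Fin.val_last, Fin.val_succ, i.isLt] <;> omega
        have hcoe_c : ∀ j : Fin (P+1),
            (((⟨0, by omega⟩ : Fin (P+3)).succAbove ∘
              (⟨0, by omega⟩ : Fin (P+2)).succAbove) j : ℕ) = (j : ℕ) + 2 := by
          intro j
          simp [coe_succAbove, Fin.val_last, Fin.val_succ]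
        rw [Matrix.det_of_lowerTriangular _ (by
          intro i j hij
          have hij' : (i : ℕ) < (j : ℕ) := hij
          have := i.isLt; have := j.isLt
          simp only [Matrix.submatrix_apply, cycleMatrix, Matrix.of_apply, Fin.ext_iff,
            hcoe_r, hcoe_c]
          split_ifs <;> first | rfl | omega | simp_all)]
        rw [Finset.prod_eq_single (Fin.last P)]
        · simp only [Matrix.submatrix_apply, cycleMatrix, Matrix.of_apply, Fin.ext_iff,
            hcoe_r, hcoe_c, Fin.val_last]
          split_ifs <;> first | rfl | omega | simp_all
        · intro l _ hl
          have hl' : (l : ℕ) ≠ P := fun h => hl (Fin.ext (by simp [Fin.val_last, h]))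
          have := l.isLt
          simp only [Matrix.submatrix_apply, cycleMatrix, Matrix.of_apply, Fin.ext_iff,
            hcoe_r, hcoe_c]
          split_ifs <;> first | rfl | omega | simp_all
        · intro h; exact absurd (Finset.mem_univ _) h
      -- minor at (0, last) : shifted tridiagonal
      have hT : ((((cycleMatrix (P+3) a b).submatrix (Fin.last (P+2)).succAbove
          ((⟨0, by omega⟩ : Fin (P+3)).succAbove)).submatrix Fin.succ
          ((Fin.last (P+1)).succAbove))).det = (P : ℝ) + 2 := by
        rw [Matrix.submatrix_submatrix]
        rw [cyc_tri (P+3) a b (P+1) 1 (by omega) _ _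
          (fun i => by
            simp [coe_succAbove, Fin.val_last, Fin.val_succ, i.isLt] <;> omega)
          (fun j => by
            simp [coe_succAbove, Fin.val_last, Fin.val_succ, j.isLt] <;> omega), tri_det]
        push_cast; ring
      rw [he0, he1, hL, hT]
      norm_num
    -- minor B (column P+1 removed)
    have hB : ((cycleMatrix (P+3) a b).submatrix (Fin.last (P+2)).succAbove
        ((⟨P+1, by omega⟩ : Fin (P+3)).succAbove)).det
        = (-1:ℝ)^(P+1) * a + b * ((P:ℝ) + 2) := by
      rw [Matrix.det_succ_column _ (Fin.last (P+1))]
      rw [sum_two _ (⟨0, by omega⟩ : Fin (P+2)) (Fin.last (P+1))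
        (fin_ne _ _ (by simp [Fin.val_last]))
        (by
          intro l h1 h2
          have hl1 : (l : ℕ) ≠ 0 := fun h => h1 (Fin.ext h)
          have hl2 : (l : ℕ) ≠ P+1 := fun h => h2 (Fin.ext (by simp [Fin.val_last, h]))
          have hz : (cycleMatrix (P+3) a b).submatrix (Fin.last (P+2)).succAbove
              ((⟨P+1, by omega⟩ : Fin (P+3)).succAbove) l (Fin.last (P+1)) = 0 := by
            have := l.isLt
            simp only [Matrix.submatrix_apply, cycleMatrix, Matrix.of_apply, Fin.ext_iff,
              coe_succAbove, Fin.val_last]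
            split_ifs <;> first | rfl | omega | simp_all
          rw [hz, mul_zero, zero_mul])]
      have he0 : (cycleMatrix (P+3) a b).submatrix (Fin.last (P+2)).succAbove
          ((⟨P+1, by omega⟩ : Fin (P+3)).succAbove) (⟨0, by omega⟩ : Fin (P+2))
          (Fin.last (P+1)) = a := by
        simp only [Matrix.submatrix_apply, cycleMatrix, Matrix.of_apply, Fin.ext_iff,
          coe_succAbove, Fin.val_last]
        split_ifs <;> first | rfl | omega | simp_all
      have he1 : (cycleMatrix (P+3) a b).submatrix (Fin.last (P+2)).succAbove
          ((⟨P+1, by omega⟩ : Fin (P+3)).succAbove) (Fin.last (P+1))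
          (Fin.last (P+1)) = b := by
        simp only [Matrix.submatrix_apply, cycleMatrix, Matrix.of_apply, Fin.ext_iff,
          coe_succAbove, Fin.val_last]
        split_ifs <;> first | rfl | omega | simp_all
      -- minor at (0, last) : upper triangular with unit diagonal
      have hU : ((((cycleMatrix (P+3) a b).submatrix (Fin.last (P+2)).succAbove
          ((⟨P+1, by omega⟩ : Fin (P+3)).succAbove)).submatrix
          ((⟨0, by omega⟩ : Fin (P+2)).succAbove) (Fin.last (P+1)).succAbove)).det = 1 := by
        rw [Matrix.submatrix_submatrix]
        have hcoe_r : ∀ i : Fin (P+1),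
            (((Fin.last (P+2)).succAbove ∘ (⟨0, by omega⟩ : Fin (P+2)).succAbove) i : ℕ)
              = (i : ℕ) + 1 := by
          intro i
          simp [coe_succAbove, Fin.val_last, i.isLt] <;> omega
        have hcoe_c : ∀ j : Fin (P+1),
            (((⟨P+1, by omega⟩ : Fin (P+3)).succAbove ∘ (Fin.last (P+1)).succAbove) j : ℕ)
              = (j : ℕ) := by
          intro j
          have := j.isLt
          simp [coe_succAbove, Fin.val_last, this] <;> omega
        rw [Matrix.det_of_upperTriangular (by
          intro i j hij
          have hij' : (j : ℕ) < (i : ℕ) := hij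
          have := i.isLt; have := j.isLt
          simp only [Matrix.submatrix_apply, cycleMatrix, Matrix.of_apply, Fin.ext_iff,
            hcoe_r, hcoe_c]
          split_ifs <;> first | rfl | omega | simp_all)]
        rw [Finset.prod_eq_one]
        intro i _
        have := i.isLt
        simp only [Matrix.submatrix_apply, cycleMatrix, Matrix.of_apply, Fin.ext_iff,
          hcoe_r, hcoe_c]
        split_ifs <;> first | rfl | omega | simp_all
      -- minor at (last, last) : tri (P+1)
      have hT : ((((cycleMatrix (P+3) a b).submatrix (Fin.last (P+2)).succAbove
          ((⟨P+1, by omega⟩ : Fin (P+3)).succAbove)).submatrix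
          ((Fin.last (P+1)).succAbove) (Fin.last (P+1)).succAbove)).det = (P : ℝ) + 2 := by
        rw [Matrix.submatrix_submatrix]
        rw [cyc_tri (P+3) a b (P+1) 0 (by omega) _ _
          (fun i => by
            have := i.isLt
            simp [coe_succAbove, Fin.val_last, this])
          (fun j => by
            have := j.isLt
            simp [coe_succAbove, Fin.val_last, this] <;> omega), tri_det]
        push_cast; ring
      rw [he0, he1, hU, hT]
      simp only [Fin.val_last]
      have t1 : ((-1:ℝ))^(((⟨0, by omega⟩ : Fin (P+2)) : ℕ)+(P+1)) = (-1:ℝ)^(P+1) := by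
        norm_num
      have t2 : ((-1:ℝ))^((P+1)+(P+1)) = 1 := by
        rw [show (P+1)+(P+1) = 2*(P+1) from by ring, pow_mul]; norm_num
      rw [t1, t2]
      ring
    rw [hv0, hv1, hv2, hC, hA, hB]
    simp only [Fin.val_last]
    have hu : ((-1:ℝ))^P * ((-1:ℝ))^P = 1 := by
      rw [← pow_add, show P + P = 2*P from by ring, pow_mul]; norm_num
    have s1 : ((-1:ℝ))^((P+2)+((⟨0, by omega⟩ : Fin (P+3)) : ℕ)) = (-1:ℝ)^P := by
      rw [show (P+2)+((⟨0, by omega⟩ : Fin (P+3)) : ℕ) = P+2 from rfl, pow_add]; norm_num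
    have s2 : ((-1:ℝ))^(P+1) = -((-1:ℝ)^P) := by rw [pow_succ]; ring
    have s3 : ((-1:ℝ))^((P+2)+((⟨P+1, by omega⟩ : Fin (P+3)) : ℕ)) = -1 := by
      rw [show (P+2)+((⟨P+1, by omega⟩ : Fin (P+3)) : ℕ) = 2*(P+1)+1 from by
        simp; ring, pow_succ, pow_mul]; norm_num
    have s4 : ((-1:ℝ))^(P+2+(P+2)) = 1 := by
      rw [show P+2+(P+2) = 2*(P+2) from by ring, pow_mul]; norm_num
    have s5 : ((-1:ℝ))^(P+3+1) = (-1:ℝ)^P := by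
      rw [show P+3+1 = P+2*2 from by ring, pow_add, pow_mul]; norm_num
    rw [s1, s2, s3, s4, s5]
    push_cast
    linear_combination (-(((P:ℝ)+2) * a^2)) * hu
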